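/- Let n ≥ 4, G = A_n, and H = (S_{{1,…,n−2}} × ⟨(n−1 n)⟩) ∩ A_n. Let G_3 = ⟨(i j k)⟩ for a 3-cycle. Then the number of double cosets |H\G/G_3| equals (n² − 5n + 8)/2. -/

import Mathlib

/-!
If `H` is the stabilizer of a point `x₀` of a transitive `G`-set `X`, then `HgK ↦ K • g⁻¹x₀`
identifies `H \ G / K` with the `K`-orbits on `X`. Here `X` is the set of 2-subsets of `Fin n`,
on which `A_n` acts transitively, and `H` is the stabilizer of `{n-2, n-1}`.

Let `T` be the support of the 3-cycle `c`. Since `⟨c⟩` acts transitively on the subsets of `T`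
of each given size, two sets of the same size lie in one `⟨c⟩`-orbit iff they agree outside `T`.
So the orbits on 2-subsets are classified by `s \ T`, which ranges over the subsets of `Tᶜ` with
at most two elements: there are `1 + (n - 3) + (n - 3).choose 2 = (n² - 5n + 8) / 2` of them.
-/

open Pointwise MulAction Finset

namespace DoubleCoset

variable {G X : Type*} [Group G] [MulAction G X]

theorem setoid_stabilizer_iff (x : X) (K : Subgroup G) {a b : G} :
    setoid (stabilizer G x : Set G) K a b ↔ orbitRel K X (a⁻¹ • x) (b⁻¹ • x) := by
  rw [rel_iff, orbitRel_apply, mem_orbit_iff]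
  constructor
  · rintro ⟨h, hh, k, hk, rfl⟩
    refine ⟨⟨k, hk⟩, ?_⟩
    rw [Subgroup.mk_smul, ← mul_smul, mul_inv_rev, mul_inv_rev, mul_inv_cancel_left, mul_smul,
      inv_smul_eq_iff.mpr (mem_stabilizer_iff.mp hh).symm]
  · rintro ⟨⟨k, hk⟩, hkx⟩
    refine ⟨b * k⁻¹ * a⁻¹, ?_, k, hk, by group⟩
    rw [mem_stabilizer_iff, mul_smul, ← hkx, Subgroup.mk_smul, mul_smul, inv_smul_smul,
      smul_inv_smul]

noncomputable def quotientStabilizerEquivOrbitRelQuotient [IsPretransitive G X] (x : X)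
    (K : Subgroup G) : Quotient (stabilizer G x : Set G) K ≃ orbitRel.Quotient K X :=
  (Quotient.congrRight fun _ _ => (setoid_stabilizer_iff x K).trans Quotient.eq.symm).trans
    (Setoid.quotientKerEquivOfSurjective _ fun q => by
      obtain ⟨y, rfl⟩ := q.mk_surjective
      obtain ⟨g, rfl⟩ := exists_smul_eq G x y
      exact ⟨g⁻¹, by simp⟩)

end DoubleCoset

namespace Equiv.Perm

variable {α : Type*} [DecidableEq α] [Fintype α]

theorem smul_finset_sdiff_of_support_subset {σ : Perm α} {T : Finset α} (h : σ.support ⊆ T)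
    (s : Finset α) : (σ • s) \ T = s \ T := by
  ext y
  simp only [mem_sdiff, ← inv_smul_mem_iff, and_congr_left_iff]
  intro hy
  have hσy : σ⁻¹ y = y := notMem_support.mp (notMem_mono (support_inv σ ▸ h) hy)
  rw [Perm.smul_def, hσy]

theorem zpow_smul_support (σ : Perm α) (m : ℤ) : (σ ^ m) • σ.support = σ.support := by
  ext y
  rw [← inv_smul_mem_iff, ← zpow_neg, Perm.smul_def, zpow_apply_mem_support]

theorem IsCycle.exists_zpow_smul_eq_of_card_le_one {σ : Perm α} (hσ : σ.IsCycle)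
    {u v : Finset α} (hu : u ⊆ σ.support) (hv : v ⊆ σ.support) (huv : #u = #v) (h1 : #u ≤ 1) :
    ∃ m : ℤ, (σ ^ m) • u = v := by
  rcases Nat.le_one_iff_eq_zero_or_eq_one.mp h1 with hu0 | hu1
  · exact ⟨0, by rw [card_eq_zero.mp hu0, card_eq_zero.mp (huv ▸ hu0 : #v = 0), smul_finset_empty]⟩
  · obtain ⟨a, rfl⟩ := card_eq_one.mp hu1
    obtain ⟨b, rfl⟩ := card_eq_one.mp (huv ▸ hu1)
    obtain ⟨m, hm⟩ := hσ.exists_zpow_eq (mem_support.mp (hu (mem_singleton_self a)))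
      (mem_support.mp (hv (mem_singleton_self b)))
    exact ⟨m, by rw [smul_finset_singleton, Perm.smul_def, hm]⟩

theorem IsThreeCycle.exists_zpow_smul_eq_of_card_eq {σ : Perm α} (hσ : σ.IsThreeCycle)
    {u v : Finset α} (hu : u ⊆ σ.support) (hv : v ⊆ σ.support) (huv : #u = #v) :
    ∃ m : ℤ, (σ ^ m) • u = v := by
  by_cases h1 : #u ≤ 1
  · exact hσ.isCycle.exists_zpow_smul_eq_of_card_le_one hu hv huv h1
  -- otherwise the complements in the support have at most one element
  have hT := hσ.card_support
  obtain ⟨m, hm⟩ := hσ.isCycle.exists_zpow_smul_eq_of_card_le_one (sdiff_subset (t := u))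
    (sdiff_subset (t := v)) (by rw [card_sdiff_of_subset hu, card_sdiff_of_subset hv, huv])
    (by rw [card_sdiff_of_subset hu]; omega)
  refine ⟨m, ?_⟩
  rw [smul_finset_sdiff, zpow_smul_support] at hm
  have hmu : σ ^ m • u ⊆ σ.support := zpow_smul_support σ m ▸ smul_finset_subset_smul_finset hu
  rw [← Finset.sdiff_sdiff_eq_self hv, ← hm, Finset.sdiff_sdiff_eq_self hmu]

theorem IsThreeCycle.exists_zpow_smul_eq_iff_sdiff_eq {σ : Perm α} (hσ : σ.IsThreeCycle)
    {s t : Finset α} (hst : #s = #t) :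
    (∃ m : ℤ, (σ ^ m) • s = t) ↔ s \ σ.support = t \ σ.support := by
  constructor
  · rintro ⟨m, rfl⟩
    exact (smul_finset_sdiff_of_support_subset (support_zpow_le σ m) s).symm
  · intro h
    have hcard : #(s ∩ σ.support) = #(t ∩ σ.support) := by
      have hs := card_sdiff_add_card_inter s σ.support
      have ht := card_sdiff_add_card_inter t σ.support
      rw [h] at hs
      omega
    obtain ⟨m, hm⟩ := hσ.exists_zpow_smul_eq_of_card_eq inter_subset_right inter_subset_right hcard
    refine ⟨m, ?_⟩
    rw [← sdiff_union_inter (σ ^ m • s) σ.support, ← sdiff_union_inter t σ.support,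
      smul_finset_sdiff_of_support_subset (support_zpow_le σ m), h, ← zpow_smul_support σ m,
      ← smul_finset_inter, hm, zpow_smul_support]

end Equiv.Perm

theorem Finset.nat_card_setOf_subset_card_le {α : Type*} (S : Finset α) (k : ℕ) :
    Nat.card {u : Finset α | u ⊆ S ∧ #u ≤ k} = ∑ r ∈ range (k + 1), (#S).choose r := by
  classical
  have hunion :
      {u : Finset α | u ⊆ S ∧ #u ≤ k} = ↑((range (k + 1)).biUnion (S.powersetCard ·)) := by
    ext u
    simp [mem_powersetCard]
  rw [hunion, Nat.card_coe_set_eq, Set.ncard_coe_finset,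
    card_biUnion fun _ _ _ _ hij => S.pairwise_disjoint_powersetCard hij]
  simp only [card_powersetCard]

namespace Set.powersetCard

variable {α : Type*} [DecidableEq α]

theorem stabilizer_subgroup_eq_subgroupOf {A : Subgroup (Equiv.Perm α)} {k : ℕ}
    (s : powersetCard α k) :
    stabilizer A s = (stabilizer (Equiv.Perm α) (s : Set α)).subgroupOf A := by
  ext g
  rw [mem_stabilizer_iff, Subgroup.mem_subgroupOf, mem_stabilizer_iff, ← Subtype.coe_inj,
    ← Finset.coe_inj]
  change (((g : Equiv.Perm α) • (s : Finset α) : Finset α) : Set α) = _ ↔ _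
  rw [Finset.coe_smul_finset]
  rfl

theorem mem_orbit_zpowers_subgroupOf_iff {A : Subgroup (Equiv.Perm α)} {σ : Equiv.Perm α}
    (hσ : σ ∈ A) {k : ℕ} {s t : powersetCard α k} :
    s ∈ orbit ((Subgroup.zpowers σ).subgroupOf A) t ↔ ∃ m : ℤ, (σ ^ m) • (t : Finset α) = s := by
  rw [mem_orbit_iff]
  constructor
  · rintro ⟨⟨⟨g, hgA⟩, hg⟩, rfl⟩
    obtain ⟨m, rfl⟩ := Subgroup.mem_zpowers_iff.mp (Subgroup.mem_subgroupOf.mp hg)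
    exact ⟨m, rfl⟩
  · rintro ⟨m, hm⟩
    exact ⟨⟨⟨σ ^ m, zpow_mem hσ m⟩, Subgroup.mem_subgroupOf.mpr (Subgroup.zpow_mem_zpowers σ m)⟩,
      Subtype.ext hm⟩

variable [Fintype α]

theorem range_sdiff {k : ℕ} {T : Finset α} (hk : k ≤ #T) :
    Set.range (fun s : powersetCard α k => (s : Finset α) \ T) = {u | u ⊆ Tᶜ ∧ #u ≤ k} := by
  ext u
  constructor
  · rintro ⟨s, rfl⟩
    exact ⟨fun x hx => Finset.mem_compl.mpr (Finset.mem_sdiff.mp hx).2,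
      (Finset.card_le_card Finset.sdiff_subset).trans_eq (card_eq s)⟩
  · rintro ⟨huT, hu⟩
    have huT : Disjoint u T := Finset.subset_compl_iff_disjoint_right.mp huT
    obtain ⟨w, hwT, hw⟩ := Finset.exists_subset_card_eq ((Nat.sub_le k #u).trans hk)
    have huw : Disjoint u w := huT.mono_right hwT
    refine ⟨⟨u ∪ w, by rw [mem_iff, Finset.card_union_of_disjoint huw, hw]; omega⟩, ?_⟩
    simp only [Finset.union_sdiff_distrib, Finset.sdiff_eq_empty_iff_subset.mpr hwT,
      Finset.union_empty]
    exact Finset.sdiff_eq_self_of_disjoint huT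

theorem nat_card_orbitRel_quotient_zpowers_of_isThreeCycle {A : Subgroup (Equiv.Perm α)}
    {σ : Equiv.Perm α} (hσ : σ.IsThreeCycle) (hσA : σ ∈ A) {k : ℕ} (hk : k ≤ 3) :
    Nat.card (orbitRel.Quotient ((Subgroup.zpowers σ).subgroupOf A) (powersetCard α k)) =
      ∑ r ∈ Finset.range (k + 1), (Fintype.card α - 3).choose r := by
  have hrel (s t : powersetCard α k) :
      orbitRel ((Subgroup.zpowers σ).subgroupOf A) (powersetCard α k) s t ↔
        Setoid.ker (fun s : powersetCard α k => (s : Finset α) \ σ.support) s t := by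
    rw [orbitRel_apply, mem_orbit_zpowers_subgroupOf_iff hσA,
      hσ.exists_zpow_smul_eq_iff_sdiff_eq (by rw [card_eq, card_eq]), Setoid.ker_def, eq_comm]
  rw [Nat.card_congr ((Quotient.congrRight hrel).trans (Setoid.quotientKerEquivRange _)),
    range_sdiff (hσ.card_support ▸ hk), Finset.nat_card_setOf_subset_card_le, card_compl,
    hσ.card_support]

end Set.powersetCard

theorem An_double_cosets_count
    (n : ℕ) (hn : 4 ≤ n)
    -- M = S_{{1,…,n−2}} × ⟨(n−1 n)⟩, i.e. the setwise stabilizer of {1,…,n−2}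
    (M : Subgroup (Equiv.Perm (Fin n)))
    (hM : M = MulAction.stabilizer (Equiv.Perm (Fin n))
        ({l : Fin n | (l : ℕ) < n - 2} : Set (Fin n)))
    -- H = M ∩ A_n
    (H : Subgroup (alternatingGroup (Fin n)))
    (hH : H = M.subgroupOf (alternatingGroup (Fin n)))
    (i j k : Fin n) (hij : i ≠ j) (hjk : j ≠ k) (hik : i ≠ k)
    -- the 3-cycle (i j k)
    (c : Equiv.Perm (Fin n)) (hc : c = Equiv.swap i j * Equiv.swap j k)
    -- G₃ = ⟨(i j k)⟩ ≤ A_n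
    (G₃ : Subgroup (alternatingGroup (Fin n)))
    (hG₃ : G₃ = (Subgroup.closure {c}).subgroupOf (alternatingGroup (Fin n))) :
    (Nat.card (DoubleCoset.Quotient (H : Set (alternatingGroup (Fin n)))
        (G₃ : Set (alternatingGroup (Fin n)))) : ℚ)
      = ((n : ℚ) ^ 2 - 5 * n + 8) / 2 := by
  have hc3 : c.IsThreeCycle := by
    rw [hc, Equiv.swap_comm]
    exact Equiv.Perm.isThreeCycle_swap_mul_swap_same hij.symm hjk hik
  let pair : Set.powersetCard (Fin n) 2 :=
    ⟨{⟨n - 2, by omega⟩, ⟨n - 1, by omega⟩}, Finset.card_pair (by rw [Ne, Fin.mk.injEq]; omega)⟩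
  have hpair : (pair : Set (Fin n)) = {l : Fin n | (l : ℕ) < n - 2}ᶜ := by
    ext l
    simp only [SetLike.mem_coe, ← Set.powersetCard.mem_coe_iff, mem_insert, Fin.ext_iff,
      mem_singleton, Set.mem_compl_iff, Set.mem_ofPred_eq, not_lt, pair]
    omega
  have hH' : H = stabilizer (alternatingGroup (Fin n)) pair := by
    rw [hH, hM, Set.powersetCard.stabilizer_subgroup_eq_subgroupOf, hpair, stabilizer_compl]
  have : IsPretransitive (alternatingGroup (Fin n)) (Set.powersetCard (Fin n) 2) :=
    Set.powersetCard.isPretransitive_alternatingGroup (by rw [Nat.card_fin]; omega)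
  rw [hH', hG₃, ← Subgroup.zpowers_eq_closure,
    Nat.card_congr (DoubleCoset.quotientStabilizerEquivOrbitRelQuotient pair _),
    Set.powersetCard.nat_card_orbitRel_quotient_zpowers_of_isThreeCycle hc3
      hc3.mem_alternatingGroup (by norm_num), Fintype.card_fin]
  obtain ⟨m, rfl⟩ := Nat.exists_eq_add_of_le' (by omega : 3 ≤ n)
  simp only [Nat.reduceAdd, add_tsub_cancel_right, sum_range_succ, range_one, sum_singleton,
    Nat.choose_zero_right, Nat.choose_one_right, Nat.cast_add, Nat.cast_one, Nat.cast_choose_two,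
    Nat.cast_ofNat]
  ring
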